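/- Let d ≥ 2 be an integer, A, B ∈ ℚ[X] nonzero coprime polynomials of degrees r_a, r_b, and let f ∈ ℚ((z^{−1})) be a non-rational formal Laurent series satisfying B(z)f(z) = A(z)f(z^d). Then the size of any primitive gap in Φ(f) does not exceed (2d − 1)(r_a + r_b)/(d − 1). -/

import Mathlib

open Polynomial Filter

/-- The irrationality exponent of a real number `ξ`: the supremum (in `EReal`) of all real `m`
such that `|ξ - p/q| < q^{-m}` holds for infinitely many rationals `p/q` (`q ≥ 1`). -/
noncomputable def irrationalityExponent (ξ : ℝ) : EReal :=
  sSup {μ : EReal | ∃ m : ℝ, μ = (m : EReal) ∧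
    {x : ℚ | |ξ - (x : ℝ)| < (x.den : ℝ) ^ (-m)}.Infinite}

/-- For a formal Laurent series `f(z) = ∑_i c i · z^{-i}` in `z⁻¹` (coefficients `c : ℤ → ℚ`),
`polyMulCoeff P c i` is the coefficient of `z^{-i}` in the product `P(z)·f(z)`. -/
noncomputable def polyMulCoeff (P : Polynomial ℚ) (c : ℤ → ℚ) (i : ℤ) : ℚ :=
  ∑ j ∈ Finset.range (P.natDegree + 1), P.coeff j * c (i + j)

/-- Coefficient of `z^{-i}` in `f(z^d)`, where `f(z) = ∑_i c i · z^{-i}`. -/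
noncomputable def substPowCoeff (d : ℕ) (c : ℤ → ℚ) (i : ℤ) : ℚ :=
  if (d : ℤ) ∣ i then c (i / d) else 0

/-- Coefficient of `z^{-i}` in a polynomial `p(z)`. -/
noncomputable def polyCoeffZinv (p : Polynomial ℚ) (i : ℤ) : ℚ :=
  if i ≤ 0 then p.coeff (-i).toNat else 0

/-- `c` is the coefficient function of a Laurent series in `z⁻¹`:
`f(z) = ∑_{i ≥ i₀} c i · z^{-i}` (support bounded below). -/
def IsLaurentSupport (c : ℤ → ℚ) : Prop := ∃ i₀ : ℤ, ∀ i < i₀, c i = 0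

/-- The Mahler functional equation `B(z)·f(z) = A(z)·f(z^d)`, stated coefficientwise for the
Laurent series `f(z) = ∑_i c i · z^{-i}`. -/
def MahlerEq (d : ℕ) (A B : Polynomial ℚ) (c : ℤ → ℚ) : Prop :=
  ∀ i : ℤ, polyMulCoeff B c i = polyMulCoeff A (substPowCoeff d c) i

/-- The Laurent series `f(z) = ∑_i c i · z^{-i}` is a rational function. -/
def IsRationalFun (c : ℤ → ℚ) : Prop :=
  ∃ p q : Polynomial ℚ, q ≠ 0 ∧ ∀ i : ℤ, polyMulCoeff q c i = polyCoeffZinv p i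

/-- `p/q` is a continued-fraction convergent of the Laurent series `f(z) = ∑_i c i · z^{-i}`:
`p, q` are coprime, `q ≠ 0`, and `q(z)f(z) - p(z)` only involves the powers `z^{-i}` with
`i > deg q` (ultrametric best-approximation criterion). -/
def IsConvergent (c : ℤ → ℚ) (p q : Polynomial ℚ) : Prop :=
  IsCoprime p q ∧ q ≠ 0 ∧
  ∀ i : ℤ, i ≤ (q.natDegree : ℤ) → polyMulCoeff q c i = polyCoeffZinv p i

/-- `p/q` is a convergent of `f` whose error `q(z)f(z) - p(z) = ∑_{i ≥ e} c' i · z^{-i}` has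
order exactly `e` (so `c' e ≠ 0`); for the `k`-th convergent, `e` is the degree `d_{k+1}` of the
denominator of the next convergent. -/
def IsConvergentWithOrder (c : ℤ → ℚ) (p q : Polynomial ℚ) (e : ℤ) : Prop :=
  IsCoprime p q ∧ q ≠ 0 ∧ (q.natDegree : ℤ) < e ∧
  (∀ i : ℤ, i < e → polyMulCoeff q c i = polyCoeffZinv p i) ∧
  polyMulCoeff q c e ≠ polyCoeffZinv p e

/-- The value `f(b) = ∑_i c i · b^{-i}` of the Laurent series at a point `b`. -/
noncomputable def mahlerValue (c : ℤ → ℚ) (b : ℝ) : ℝ := ∑' i : ℤ, (c i : ℝ) * b ^ (-i)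

/-- `b` lies inside the disc of convergence of `f`: `∑_i c i · b^{-i}` converges absolutely. -/
def InDiscOfConvergence (c : ℤ → ℚ) (b : ℝ) : Prop :=
  Summable fun i : ℤ => |(c i : ℝ) * b ^ (-i)|

/-- `Φ(f)`: the set of degrees of denominators of convergents of `f`. -/
def convDegrees (c : ℤ → ℚ) : Set ℕ :=
  {n | ∃ p q : Polynomial ℚ, IsConvergent c p q ∧ q.natDegree = n}

/-- `[u,v]` is a gap in `Φ(f)`: `u, v ∈ Φ(f)`, `u < v`, and no element of `Φ(f)` lies strictly
between `u` and `v`. Its size is `v - u`. -/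
def GapIn (c : ℤ → ℚ) (u v : ℕ) : Prop :=
  u ∈ convDegrees c ∧ v ∈ convDegrees c ∧ u < v ∧
  ∀ w : ℕ, u < w → w < v → w ∉ convDegrees c

/-- `[u,v]` is a big gap in `Φ(f)`: a gap whose size exceeds `(r_a + r_b)/(d-1)`. -/
def BigGap (c : ℤ → ℚ) (A B : Polynomial ℚ) (d : ℕ) (u v : ℕ) : Prop :=
  GapIn c u v ∧
  ((A.natDegree : ℝ) + (B.natDegree : ℝ)) / ((d : ℝ) - 1) < (v : ℝ) - (u : ℝ)

/-- The partial order `≺` on big gaps (recorded through the left endpoints, which determine the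
gaps' convergents): the gap at `u` precedes the gap at `u'` if for some `m ≥ 1`,
`p_{u'}/q_{u'} = ∏_{t=0}^{m-1} (A(z^{d^t})/B(z^{d^t})) · p_u(z^{d^m})/q_u(z^{d^m})`
as rational functions. -/
def GapPrec (c : ℤ → ℚ) (A B : Polynomial ℚ) (d : ℕ) (u u' : ℕ) : Prop :=
  ∃ (pu qu pu' qu' : Polynomial ℚ) (m : ℕ), 0 < m ∧
    IsConvergent c pu qu ∧ qu.natDegree = u ∧
    IsConvergent c pu' qu' ∧ qu'.natDegree = u' ∧
    pu' * ((∏ t ∈ Finset.range m, B.comp (Polynomial.X ^ d ^ t))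
            * qu.comp (Polynomial.X ^ d ^ m))
      = qu' * ((∏ t ∈ Finset.range m, A.comp (Polynomial.X ^ d ^ t))
            * pu.comp (Polynomial.X ^ d ^ m))

/-- A big gap is primitive if no big gap precedes it under `≺`. -/
def PrimitiveGap (c : ℤ → ℚ) (A B : Polynomial ℚ) (d : ℕ) (u v : ℕ) : Prop :=
  BigGap c A B d u v ∧ ¬ ∃ u'' v'' : ℕ, BigGap c A B d u'' v'' ∧ GapPrec c A B d u'' u

/-!
Suppose the primitive gap `[u, v]` were longer than `(2d - 1)(r_a + r_b)/(d - 1)`, and let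
`p/q` be its convergent, so that `q f - p` has order exactly `v`. Since
`A(z) q(z) f(z^d) - B(z) p(z) = B(z) (q(z) f(z) - p(z))`, the fraction `B p/(A q)` approximates
`f(z^d)` to order `v - r_b`; in lowest terms `P/Q` the order even grows by the degree of the
cancelled factor. Coprime approximations of high enough order are unique up to scalars, so
`P/Q = p₀(z^d)/q₀(z^d)` for the gap `[u₀, v₀]` of `Φ(f)` with `d u₀ ≤ deg Q < d v₀`. Hence
`[u₀, v₀] ≺ [u, v]`, and comparing degrees and orders gives
`d (v₀ - u₀) ≥ v - u - r_a - r_b > d (r_a + r_b)/(d - 1)`: the gap `[u₀, v₀]` is big,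
contradicting primitivity.
-/

section CoefficientCalculus

lemma polyMulCoeff_eq_sum_range (P : ℚ[X]) (c : ℤ → ℚ) (i : ℤ) {M : ℕ}
    (h : P.natDegree < M) :
    polyMulCoeff P c i = ∑ j ∈ Finset.range M, P.coeff j * c (i + j) := by
  refine Finset.sum_subset (Finset.range_subset_range.2 h) fun j _ hj => ?_
  rw [Finset.mem_range, not_lt] at hj
  rw [coeff_eq_zero_of_natDegree_lt (by omega), zero_mul]

lemma polyMulCoeff_add (P Q : ℚ[X]) (c : ℤ → ℚ) (i : ℤ) :
    polyMulCoeff (P + Q) c i = polyMulCoeff P c i + polyMulCoeff Q c i := by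
  set M := max (P + Q).natDegree (max P.natDegree Q.natDegree) + 1
  rw [polyMulCoeff_eq_sum_range (P + Q) c i (M := M) (by omega),
    polyMulCoeff_eq_sum_range P c i (M := M) (by omega),
    polyMulCoeff_eq_sum_range Q c i (M := M) (by omega), ← Finset.sum_add_distrib]
  simp only [coeff_add, add_mul]

lemma polyMulCoeff_C_mul (a : ℚ) (P : ℚ[X]) (c : ℤ → ℚ) (i : ℤ) :
    polyMulCoeff (C a * P) c i = a * polyMulCoeff P c i := by
  rw [polyMulCoeff_eq_sum_range (C a * P) c i (M := P.natDegree + 1)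
    (Nat.lt_succ_of_le (natDegree_C_mul_le a P)), polyMulCoeff, Finset.mul_sum]
  simp only [coeff_C_mul, mul_assoc]

lemma polyMulCoeff_C (a : ℚ) (c : ℤ → ℚ) (i : ℤ) : polyMulCoeff (C a) c i = a * c i := by
  simp [polyMulCoeff]

lemma polyMulCoeff_X_mul (P : ℚ[X]) (c : ℤ → ℚ) (i : ℤ) :
    polyMulCoeff (X * P) c i = polyMulCoeff P c (i + 1) := by
  rcases eq_or_ne P 0 with rfl | hP
  · simp [polyMulCoeff]
  have hdeg : (X * P).natDegree < P.natDegree + 2 := by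
    rw [natDegree_mul X_ne_zero hP, natDegree_X]; omega
  rw [polyMulCoeff_eq_sum_range (X * P) c i hdeg, Finset.sum_range_succ', mul_coeff_zero,
    coeff_X_zero, zero_mul, zero_mul, add_zero, polyMulCoeff]
  refine Finset.sum_congr rfl fun j _ => ?_
  rw [coeff_X_mul]
  congr 2
  push_cast; ring

lemma polyMulCoeff_X_pow_mul (k : ℕ) (P : ℚ[X]) (c : ℤ → ℚ) (i : ℤ) :
    polyMulCoeff (X ^ k * P) c i = polyMulCoeff P c (i + k) := by
  induction k generalizing i with
  | zero => simp
  | succ k ih =>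
    rw [pow_succ', mul_assoc, polyMulCoeff_X_mul, ih]
    congr 1
    push_cast; ring

lemma polyMulCoeff_mul (P Q : ℚ[X]) (c : ℤ → ℚ) (i : ℤ) :
    polyMulCoeff (P * Q) c i = polyMulCoeff P (polyMulCoeff Q c) i := by
  induction P using Polynomial.induction_on generalizing i with
  | C a => rw [polyMulCoeff_C_mul, polyMulCoeff_C]
  | add p q hp hq => rw [add_mul, polyMulCoeff_add, hp, hq, polyMulCoeff_add]
  | monomial n a ih =>
    have hX : C a * X ^ (n + 1) = X * (C a * X ^ n) := by ring
    rw [hX, mul_assoc, polyMulCoeff_X_mul, ih, polyMulCoeff_X_mul]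

lemma polyMulCoeff_sub_right (P : ℚ[X]) (s t : ℤ → ℚ) (i : ℤ) :
    polyMulCoeff P (s - t) i = polyMulCoeff P s i - polyMulCoeff P t i := by
  simp only [polyMulCoeff, Pi.sub_apply, mul_sub, Finset.sum_sub_distrib]

lemma polyMulCoeff_eq_zero_of_lt {s : ℤ → ℚ} {e : ℤ} (hs : ∀ j < e, s j = 0)
    (P : ℚ[X]) {i : ℤ} (hi : i < e - P.natDegree) : polyMulCoeff P s i = 0 :=
  Finset.sum_eq_zero fun j hj => by
    rw [Finset.mem_range] at hj
    rw [hs _ (by omega), mul_zero]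

lemma polyMulCoeff_sub_natDegree {s : ℤ → ℚ} {e : ℤ} (hs : ∀ j < e, s j = 0) (P : ℚ[X]) :
    polyMulCoeff P s (e - P.natDegree) = P.leadingCoeff * s e := by
  rw [polyMulCoeff, Finset.sum_range_succ, Finset.sum_eq_zero fun j hj => ?_, zero_add,
    sub_add_cancel, leadingCoeff]
  rw [Finset.mem_range] at hj
  rw [hs _ (by omega), mul_zero]

lemma polyCoeffZinv_one (i : ℤ) : polyCoeffZinv 1 i = if i = 0 then 1 else 0 := by
  rcases lt_trichotomy i 0 with hi | rfl | hi
  · simp [polyCoeffZinv, hi.le, hi.ne, coeff_one]; omega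
  · simp [polyCoeffZinv]
  · simp [polyCoeffZinv, hi.ne', not_le.2 hi]

lemma polyMulCoeff_polyCoeffZinv_one (p : ℚ[X]) (i : ℤ) :
    polyMulCoeff p (polyCoeffZinv 1) i = polyCoeffZinv p i := by
  simp only [polyMulCoeff, polyCoeffZinv_one, mul_ite, mul_one, mul_zero]
  by_cases hi : i ≤ 0
  · have hiff : ∀ j : ℕ, i + j = 0 ↔ (-i).toNat = j := fun j => by omega
    simp only [hiff, Finset.sum_ite_eq, Finset.mem_range, polyCoeffZinv, if_pos hi]
    split_ifs with h
    · rfl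
    · exact (coeff_eq_zero_of_natDegree_lt (by omega)).symm
  · rw [polyCoeffZinv, if_neg hi]
    exact Finset.sum_eq_zero fun j _ => if_neg (by omega)

lemma polyMulCoeff_polyCoeffZinv (P q : ℚ[X]) (i : ℤ) :
    polyMulCoeff P (polyCoeffZinv q) i = polyCoeffZinv (P * q) i := by
  rw [← polyMulCoeff_polyCoeffZinv_one, polyMulCoeff_mul]
  exact congrArg (polyMulCoeff P · i) (funext fun j => (polyMulCoeff_polyCoeffZinv_one q j).symm)

lemma eq_of_polyCoeffZinv_eq {p q : ℚ[X]} (h : ∀ i ≤ 0, polyCoeffZinv p i = polyCoeffZinv q i) :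
    p = q := by
  ext n
  simpa [polyCoeffZinv] using h (-n) (by omega)

end CoefficientCalculus

section Substitution

variable {d : ℕ}

lemma substPowCoeff_add_right (hd : 0 < d) (s : ℤ → ℚ) (i : ℤ) :
    substPowCoeff d s (i + d) = substPowCoeff d (fun j => s (j + 1)) i := by
  have hdz : (d : ℤ) ≠ 0 := by exact_mod_cast hd.ne'
  unfold substPowCoeff
  by_cases h : (d : ℤ) ∣ i
  · rw [if_pos (h.add dvd_rfl), if_pos h, Int.add_ediv_of_dvd_left h, Int.ediv_self hdz]
  · rw [if_neg (fun h' => h (by simpa using h'.sub (dvd_refl (d : ℤ)))), if_neg h]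

lemma polyMulCoeff_comp_X_pow (hd : 0 < d) (P : ℚ[X]) (s : ℤ → ℚ) (i : ℤ) :
    polyMulCoeff (P.comp (X ^ d)) (substPowCoeff d s) i
      = substPowCoeff d (polyMulCoeff P s) i := by
  induction P using Polynomial.induction_on generalizing i with
  | C a =>
    rw [C_comp, polyMulCoeff_C]
    unfold substPowCoeff
    split_ifs <;> simp [polyMulCoeff_C]
  | add p q hp hq =>
    rw [add_comp, polyMulCoeff_add, hp, hq]
    unfold substPowCoeff
    split_ifs <;> simp [polyMulCoeff_add]
  | monomial n a ih =>
    have hX : C a * X ^ (n + 1) = X * (C a * X ^ n) := by ring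
    rw [hX, mul_comp, X_comp, polyMulCoeff_X_pow_mul, ih, substPowCoeff_add_right hd]
    exact congrArg (substPowCoeff d · i) (funext fun j => (polyMulCoeff_X_mul _ s j).symm)

lemma substPowCoeff_polyCoeffZinv_one :
    substPowCoeff d (polyCoeffZinv 1) = polyCoeffZinv 1 := by
  funext i
  simp only [substPowCoeff, polyCoeffZinv_one]
  split_ifs with hdvd h1 h2 h2 h2 <;> try rfl
  · exact absurd (by rw [← Int.ediv_mul_cancel hdvd, h1, zero_mul]) h2
  · exact absurd (by rw [h2, Int.zero_ediv]) h1
  · exact absurd (h2 ▸ dvd_zero _) hdvd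

lemma polyCoeffZinv_comp_X_pow (hd : 0 < d) (p : ℚ[X]) (i : ℤ) :
    polyCoeffZinv (p.comp (X ^ d)) i = substPowCoeff d (polyCoeffZinv p) i := by
  rw [← polyMulCoeff_polyCoeffZinv_one, ← substPowCoeff_polyCoeffZinv_one,
    polyMulCoeff_comp_X_pow hd]
  exact congrArg (substPowCoeff d · i) (funext fun j => polyMulCoeff_polyCoeffZinv_one p j)

lemma substPowCoeff_mul_left (hd : 0 < d) (s : ℤ → ℚ) (k : ℤ) :
    substPowCoeff d s (d * k) = s k := by
  rw [substPowCoeff, if_pos (dvd_mul_right _ _), Int.mul_ediv_cancel_left _ (by omega)]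

lemma substPowCoeff_eq_zero_of_lt (hd : 0 < d) {s : ℤ → ℚ} {e : ℤ} (h : ∀ i < e, s i = 0) :
    ∀ i < d * e, substPowCoeff d s i = 0 := by
  intro i hi
  rw [substPowCoeff]
  split_ifs with hdvd
  · obtain ⟨k, rfl⟩ := hdvd
    rw [Int.mul_ediv_cancel_left _ (by omega)]
    exact h k (lt_of_mul_lt_mul_left hi (by omega))
  · rfl

end Substitution

section Remainder

/-- Coefficients of the remainder `q(z)f(z) - p(z)` of the approximation `p/q` to
`f = ∑ c i z^{-i}`. -/
noncomputable def remainderCoeff (c : ℤ → ℚ) (p q : ℚ[X]) : ℤ → ℚ :=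
  polyMulCoeff q c - polyCoeffZinv p

variable {c : ℤ → ℚ}

lemma remainderCoeff_mul_left (g p q : ℚ[X]) (i : ℤ) :
    remainderCoeff c (g * p) (g * q) i = polyMulCoeff g (remainderCoeff c p q) i := by
  simp only [remainderCoeff, Pi.sub_apply, polyMulCoeff_sub_right, polyMulCoeff_polyCoeffZinv,
    polyMulCoeff_mul]

lemma remainderCoeff_C_mul (a : ℚ) (p q : ℚ[X]) (i : ℤ) :
    remainderCoeff c (C a * p) (C a * q) i = a * remainderCoeff c p q i := by
  rw [remainderCoeff_mul_left, polyMulCoeff_C]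

lemma remainderCoeff_comp_X_pow {d : ℕ} (hd : 0 < d) (p q : ℚ[X]) (i : ℤ) :
    remainderCoeff (substPowCoeff d c) (p.comp (X ^ d)) (q.comp (X ^ d)) i
      = substPowCoeff d (remainderCoeff c p q) i := by
  simp only [remainderCoeff, Pi.sub_apply, polyMulCoeff_comp_X_pow hd,
    polyCoeffZinv_comp_X_pow hd, substPowCoeff]
  split_ifs <;> simp

lemma remainderCoeff_of_mahlerEq {d : ℕ} {A B : ℚ[X]} (hfeq : MahlerEq d A B c)
    (p q : ℚ[X]) (i : ℤ) :
    remainderCoeff (substPowCoeff d c) (B * p) (A * q) i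
      = polyMulCoeff B (remainderCoeff c p q) i := by
  have hAq : polyMulCoeff (A * q) (substPowCoeff d c) = polyMulCoeff (B * q) c := by
    funext j
    rw [mul_comm, polyMulCoeff_mul, mul_comm, polyMulCoeff_mul]
    exact congrArg (polyMulCoeff q · j) (funext fun k => (hfeq k).symm)
  rw [← remainderCoeff_mul_left, remainderCoeff, hAq]
  rfl

end Remainder

section LaurentSupport

variable {s : ℤ → ℚ}

lemma IsLaurentSupport.polyMul (hs : IsLaurentSupport s) (P : ℚ[X]) :
    IsLaurentSupport (polyMulCoeff P s) := by
  obtain ⟨i₀, h⟩ := hs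
  exact ⟨i₀ - P.natDegree, fun i hi => polyMulCoeff_eq_zero_of_lt h P hi⟩

lemma isLaurentSupport_polyCoeffZinv (p : ℚ[X]) : IsLaurentSupport (polyCoeffZinv p) :=
  ⟨-p.natDegree, fun i hi => by
    rw [polyCoeffZinv, if_pos (by omega), coeff_eq_zero_of_natDegree_lt (by omega)]⟩

lemma IsLaurentSupport.sub {t : ℤ → ℚ} (hs : IsLaurentSupport s) (ht : IsLaurentSupport t) :
    IsLaurentSupport (s - t) := by
  obtain ⟨i₀, hs⟩ := hs
  obtain ⟨j₀, ht⟩ := ht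
  exact ⟨min i₀ j₀, fun i hi => by simp [hs i (by omega), ht i (by omega)]⟩

lemma IsLaurentSupport.remainder {c : ℤ → ℚ} (hc : IsLaurentSupport c) (p q : ℚ[X]) :
    IsLaurentSupport (remainderCoeff c p q) :=
  (hc.polyMul q).sub (isLaurentSupport_polyCoeffZinv p)

lemma IsLaurentSupport.substPow (hs : IsLaurentSupport s) (d : ℕ) :
    IsLaurentSupport (substPowCoeff d s) := by
  obtain ⟨i₀, h⟩ := hs
  refine ⟨min (d * i₀) 0, fun i hi => ?_⟩
  unfold substPowCoeff
  split_ifs with hdvd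
  · obtain ⟨k, rfl⟩ := hdvd
    have hd : (d : ℤ) ≠ 0 := by rintro h; simp [h] at hi
    rw [Int.mul_ediv_cancel_left _ hd]
    exact h k (lt_of_mul_lt_mul_left (hi.trans_le (min_le_left _ _)) (by omega))
  · rfl

lemma IsLaurentSupport.exists_order (hs : IsLaurentSupport s) (hne : s ≠ 0) :
    ∃ e : ℤ, s e ≠ 0 ∧ ∀ i < e, s i = 0 := by
  obtain ⟨b, hb⟩ := hs
  obtain ⟨i, hi⟩ := Function.ne_iff.1 hne
  obtain ⟨e, he, hmin⟩ := Int.exists_least_of_bdd (P := fun i => s i ≠ 0)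
    ⟨b, fun j hj => le_of_not_gt fun hlt => hj (hb j hlt)⟩ ⟨i, hi⟩
  exact ⟨e, he, fun j hj => by_contra fun h => absurd (hmin j h) (not_le.2 hj)⟩

/-- The lowest term of `s` times the leading coefficient of `g` is the lowest term of `g s`. -/
lemma IsLaurentSupport.eq_zero_of_polyMulCoeff_eq_zero (hs : IsLaurentSupport s) {g : ℚ[X]}
    (hg : g ≠ 0) {e : ℤ} (h : ∀ i < e, polyMulCoeff g s i = 0) :
    ∀ i < e + g.natDegree, s i = 0 := by
  by_contra! hcon
  obtain ⟨i, hie, hi⟩ := hcon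
  obtain ⟨j, hj, hjmin⟩ := hs.exists_order (Function.ne_iff.2 ⟨i, hi⟩)
  have hji : j ≤ i := le_of_not_gt fun hlt => hi (hjmin i hlt)
  have hlead := polyMulCoeff_sub_natDegree hjmin g
  rw [h _ (by omega)] at hlead
  exact mul_ne_zero (leadingCoeff_ne_zero.2 hg) hj hlead.symm

end LaurentSupport

section Approximation

variable {c : ℤ → ℚ}

/-- `q₂ (q₁ f - p₁) - q₁ (q₂ f - p₂) = q₁ p₂ - q₂ p₁` is a polynomial that is `O(z⁻¹)`. -/
lemma mul_eq_mul_of_remainderCoeff_eq_zero {p₁ q₁ p₂ q₂ : ℚ[X]} {e₁ e₂ : ℤ}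
    (h₁ : ∀ i < e₁, remainderCoeff c p₁ q₁ i = 0) (h₂ : ∀ i < e₂, remainderCoeff c p₂ q₂ i = 0)
    (hq₂ : (q₂.natDegree : ℤ) < e₁) (hq₁ : (q₁.natDegree : ℤ) < e₂) :
    q₁ * p₂ = q₂ * p₁ := by
  refine eq_of_polyCoeffZinv_eq fun i hi => ?_
  have hr₁ := remainderCoeff_mul_left (c := c) q₂ p₁ q₁ i
  have hr₂ := remainderCoeff_mul_left (c := c) q₁ p₂ q₂ i
  rw [polyMulCoeff_eq_zero_of_lt h₁ q₂ (by omega)] at hr₁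
  rw [polyMulCoeff_eq_zero_of_lt h₂ q₁ (by omega)] at hr₂
  simp only [remainderCoeff, Pi.sub_apply, mul_comm q₂ q₁] at hr₁ hr₂
  linarith

lemma exists_eq_C_mul_of_remainderCoeff_eq_zero {p₁ q₁ p₂ q₂ : ℚ[X]} {e₁ e₂ : ℤ}
    (hpq₁ : IsCoprime p₁ q₁) (hpq₂ : IsCoprime p₂ q₂) (hq₁0 : q₁ ≠ 0)
    (h₁ : ∀ i < e₁, remainderCoeff c p₁ q₁ i = 0) (h₂ : ∀ i < e₂, remainderCoeff c p₂ q₂ i = 0)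
    (hq₂ : (q₂.natDegree : ℤ) < e₁) (hq₁ : (q₁.natDegree : ℤ) < e₂) :
    ∃ a : ℚ, a ≠ 0 ∧ q₂ = C a * q₁ ∧ p₂ = C a * p₁ := by
  have h := mul_eq_mul_of_remainderCoeff_eq_zero h₁ h₂ hq₂ hq₁
  obtain ⟨w, hw⟩ := associated_of_dvd_dvd (hpq₁.symm.dvd_of_dvd_mul_right ⟨p₂, h.symm⟩)
    (hpq₂.symm.dvd_of_dvd_mul_right ⟨p₁, h⟩)
  obtain ⟨a, ha, hC⟩ := Polynomial.isUnit_iff.1 w.isUnit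
  have hq : q₂ = C a * q₁ := by rw [← hw, ← hC, mul_comm]
  refine ⟨a, ha.ne_zero, hq, mul_left_cancel₀ hq₁0 ?_⟩
  rw [h, hq]
  ring

/-- The two approximations are proportional, and the second one has a nonzero remainder
coefficient at `e'`. -/
lemma le_of_remainderCoeff_eq_zero {p q p' q' : ℚ[X]} {e e' : ℤ}
    (hpq : IsCoprime p q) (hpq' : IsCoprime p' q') (hq' : q' ≠ 0)
    (h : ∀ i < e, remainderCoeff c p q i = 0)
    (h' : ∀ i < e', remainderCoeff c p' q' i = 0) (hne' : remainderCoeff c p' q' e' ≠ 0)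
    (hq : (q.natDegree : ℤ) < e') (hq'e : (q'.natDegree : ℤ) < e) :
    e ≤ e' := by
  obtain ⟨a, ha, hqa, hpa⟩ := exists_eq_C_mul_of_remainderCoeff_eq_zero hpq' hpq hq' h' h hq hq'e
  by_contra! hlt
  have he' := h e' hlt
  rw [hqa, hpa, remainderCoeff_C_mul] at he'
  exact mul_ne_zero ha hne' he'

lemma exists_coprime_of_remainderCoeff_eq_zero (hc : IsLaurentSupport c) {p q : ℚ[X]}
    (hq : q ≠ 0) {e : ℤ} (h : ∀ i < e, remainderCoeff c p q i = 0) :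
    ∃ g p' q' : ℚ[X], g ≠ 0 ∧ p = g * p' ∧ q = g * q' ∧ IsCoprime p' q' ∧
      ∀ i < e + g.natDegree, remainderCoeff c p' q' i = 0 := by
  have hg : gcd p q ≠ 0 := gcd_ne_zero_of_right hq
  have hp : p = gcd p q * (p / gcd p q) :=
    (EuclideanDomain.mul_div_cancel' hg (gcd_dvd_left p q)).symm
  have hq' : q = gcd p q * (q / gcd p q) :=
    (EuclideanDomain.mul_div_cancel' hg (gcd_dvd_right p q)).symm
  refine ⟨gcd p q, p / gcd p q, q / gcd p q, hg, hp, hq', isCoprime_div_gcd_div_gcd hq,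
    (hc.remainder _ _).eq_zero_of_polyMulCoeff_eq_zero hg fun i hi => ?_⟩
  rw [← remainderCoeff_mul_left, ← hp, ← hq']
  exact h i hi

lemma exists_polyCoeffZinv_eq {s : ℤ → ℚ} (hs : IsLaurentSupport s) :
    ∃ p : ℚ[X], ∀ i ≤ 0, polyCoeffZinv p i = s i := by
  classical
  obtain ⟨i₀, h⟩ := hs
  refine ⟨∑ j ∈ Finset.range (-i₀ + 1).toNat, C (s (-j)) * X ^ j, fun i hi => ?_⟩
  simp only [polyCoeffZinv, if_pos hi, finsetSum_coeff, coeff_C_mul, coeff_X_pow, mul_ite,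
    mul_one, mul_zero, Finset.sum_ite_eq, Finset.mem_range]
  split_ifs with hlt
  · congr; omega
  · exact (h i (by omega)).symm

/-- Padé approximation: the `n` linear conditions on the `n + 1` coefficients of `q` have a
nonzero solution. -/
lemma exists_remainderCoeff_eq_zero (hc : IsLaurentSupport c) (n : ℕ) :
    ∃ p q : ℚ[X], q ≠ 0 ∧ q.natDegree ≤ n ∧ ∀ i < (n : ℤ) + 1, remainderCoeff c p q i = 0 := by
  let L : degreeLT ℚ (n + 1) →ₗ[ℚ] Fin n → ℚ :=
    { toFun := fun q k => polyMulCoeff q c (k + 1)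
      map_add' := fun q r => funext fun k => polyMulCoeff_add q r c _
      map_smul' := fun a q => funext fun k => by
        simp [smul_eq_C_mul, polyMulCoeff_C_mul] }
  have : FiniteDimensional ℚ (degreeLT ℚ (n + 1)) :=
    LinearEquiv.finiteDimensional (degreeLTEquiv ℚ (n + 1)).symm
  have hker : LinearMap.ker L ≠ ⊥ := L.ker_ne_bot_of_finrank_lt <| by
    rw [(degreeLTEquiv ℚ (n + 1)).finrank_eq]
    simp
  obtain ⟨⟨q, hqdeg⟩, hqker, hq0⟩ := Submodule.ne_bot_iff _ |>.1 hker
  obtain ⟨p, hp⟩ := exists_polyCoeffZinv_eq (hc.polyMul q)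
  refine ⟨p, q, fun h => hq0 (by simp [h]), ?_, fun i hi => ?_⟩
  · rw [mem_degreeLT] at hqdeg
    exact natDegree_le_of_degree_le (Order.le_of_lt_succ (by exact_mod_cast hqdeg))
  rw [remainderCoeff, Pi.sub_apply, sub_eq_zero]
  by_cases hi0 : i ≤ 0
  · exact (hp i hi0).symm
  · have hk : polyMulCoeff q c ((i - 1).toNat + 1) = 0 :=
      congrFun (LinearMap.mem_ker.1 hqker) ⟨(i - 1).toNat, by omega⟩
    rw [polyCoeffZinv, if_neg hi0, ← hk]
    congr
    omega

lemma exists_isCoprime_remainderCoeff_eq_zero (hc : IsLaurentSupport c) (n : ℕ) :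
    ∃ p q : ℚ[X], IsCoprime p q ∧ q ≠ 0 ∧ q.natDegree ≤ n ∧
      ∀ i < (n : ℤ) + 1, remainderCoeff c p q i = 0 := by
  obtain ⟨p, q, hq, hdeg, h⟩ := exists_remainderCoeff_eq_zero hc n
  obtain ⟨g, p', q', hg, -, rfl, hpq', h'⟩ := exists_coprime_of_remainderCoeff_eq_zero hc hq h
  have hq' : q' ≠ 0 := right_ne_zero_of_mul hq
  rw [natDegree_mul hg hq'] at hdeg
  exact ⟨p', q', hpq', hq', by omega, fun i hi => h' i (by omega)⟩

end Approximation

section Convergents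

variable {c : ℤ → ℚ} {p q : ℚ[X]}

lemma IsConvergent.remainderCoeff_eq_zero (h : IsConvergent c p q) :
    ∀ i < (q.natDegree : ℤ) + 1, remainderCoeff c p q i = 0 := fun i hi =>
  sub_eq_zero.2 (h.2.2 i (by omega))

lemma isConvergent_of_remainderCoeff_eq_zero (hpq : IsCoprime p q) (hq : q ≠ 0)
    (h : ∀ i < (q.natDegree : ℤ) + 1, remainderCoeff c p q i = 0) : IsConvergent c p q :=
  ⟨hpq, hq, fun i hi => sub_eq_zero.1 (h i (by omega))⟩

lemma IsConvergent.comp_X_pow {d : ℕ} (hd : 0 < d) (h : IsConvergent c p q) :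
    IsCoprime (p.comp (X ^ d)) (q.comp (X ^ d)) ∧ q.comp (X ^ d) ≠ 0 :=
  ⟨h.1.map (expand ℚ d).toRingHom, (expand_eq_zero hd).not.2 h.2.1⟩

lemma zero_mem_convDegrees (hc : IsLaurentSupport c) : 0 ∈ convDegrees c := by
  obtain ⟨p, q, hpq, hq, hdeg, h⟩ := exists_isCoprime_remainderCoeff_eq_zero hc 0
  have hdeg : q.natDegree = 0 := by omega
  exact ⟨p, q, isConvergent_of_remainderCoeff_eq_zero hpq hq (by simpa [hdeg] using h), hdeg⟩

lemma IsConvergent.exists_order (hc : IsLaurentSupport c) (hf : ¬ IsRationalFun c)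
    (h : IsConvergent c p q) :
    ∃ e : ℕ, q.natDegree < e ∧ (∀ i < (e : ℤ), remainderCoeff c p q i = 0) ∧
      remainderCoeff c p q e ≠ 0 := by
  have hne : remainderCoeff c p q ≠ 0 := fun h0 =>
    hf ⟨p, q, h.2.1, fun i => sub_eq_zero.1 (congrFun h0 i)⟩
  obtain ⟨e, he, hlt⟩ := (hc.remainder p q).exists_order hne
  have hqe : (q.natDegree : ℤ) < e := by
    by_contra! hle
    exact he (h.remainderCoeff_eq_zero e (by omega))
  lift e to ℕ using by omega
  exact ⟨e, by exact_mod_cast hqe, hlt, he⟩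

/-- The order of `q f - p` is the degree of the next convergent: a Padé approximant of that
degree has the same order, and a convergent of intermediate degree would be proportional
to `p/q`. -/
lemma IsConvergent.gapIn_of_order (hc : IsLaurentSupport c) (h : IsConvergent c p q) {e : ℕ}
    (hqe : q.natDegree < e) (hvan : ∀ i < (e : ℤ), remainderCoeff c p q i = 0)
    (hne : remainderCoeff c p q e ≠ 0) :
    GapIn c q.natDegree e := by
  refine ⟨⟨p, q, h, rfl⟩, ?_, hqe, ?_⟩
  · obtain ⟨p', q', hpq', hq', hdeg', h'⟩ := exists_isCoprime_remainderCoeff_eq_zero hc e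
    have hdeg : q'.natDegree = e := by
      by_contra hlt
      have := le_of_remainderCoeff_eq_zero hpq' h.1 h.2.1 h' hvan hne (by omega) (by omega)
      omega
    exact ⟨p', q', isConvergent_of_remainderCoeff_eq_zero hpq' hq' (hdeg ▸ h'), hdeg⟩
  · rintro w hqw hwe ⟨p', q', h', rfl⟩
    obtain ⟨a, ha, hq'a, -⟩ := exists_eq_C_mul_of_remainderCoeff_eq_zero h.1 h'.1 h.2.1 hvan
      h'.remainderCoeff_eq_zero (by exact_mod_cast hwe) (by omega)
    rw [hq'a, natDegree_C_mul ha] at hqw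
    exact lt_irrefl _ hqw

lemma GapIn.right_unique {u v v' : ℕ} (h : GapIn c u v) (h' : GapIn c u v') : v = v' := by
  by_contra hne
  rcases Nat.lt_or_gt_of_ne hne with hlt | hlt
  · exact h'.2.2.2 v h.2.2.1 hlt h.2.1
  · exact h.2.2.2 v' h'.2.2.1 hlt h'.2.1

lemma IsConvergent.order_of_gapIn (hc : IsLaurentSupport c) (hf : ¬ IsRationalFun c)
    (h : IsConvergent c p q) {v : ℕ} (hgap : GapIn c q.natDegree v) :
    (∀ i < (v : ℤ), remainderCoeff c p q i = 0) ∧ remainderCoeff c p q v ≠ 0 := by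
  obtain ⟨e, hqe, hvan, hne⟩ := h.exists_order hc hf
  obtain rfl := (h.gapIn_of_order hc hqe hvan hne).right_unique hgap
  exact ⟨hvan, hne⟩

/-- `u₀` is the largest element of `Φ(f)` with `d u₀ ≤ w`. -/
lemma exists_gapIn_mul_le_lt (hc : IsLaurentSupport c) (hf : ¬ IsRationalFun c) {d : ℕ}
    (hd : 0 < d) (w : ℕ) :
    ∃ u₀ v₀ : ℕ, GapIn c u₀ v₀ ∧ d * u₀ ≤ w ∧ w < d * v₀ := by
  classical
  set u₀ := Nat.findGreatest (fun x => x ∈ convDegrees c ∧ d * x ≤ w) w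
  obtain ⟨⟨p, q, h, hqu⟩, hu₀⟩ : u₀ ∈ convDegrees c ∧ d * u₀ ≤ w :=
    Nat.findGreatest_spec (P := fun x => x ∈ convDegrees c ∧ d * x ≤ w) (Nat.zero_le w)
      ⟨zero_mem_convDegrees hc, by simp⟩
  obtain ⟨e, hqe, hvan, hne⟩ := h.exists_order hc hf
  have hgap := h.gapIn_of_order hc hqe hvan hne
  rw [hqu] at hgap
  refine ⟨u₀, e, hgap, hu₀, not_le.1 fun hew => ?_⟩
  have hle : e ≤ u₀ := Nat.le_findGreatest (hew.trans' (Nat.le_mul_of_pos_left e hd))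
    ⟨hgap.2.1, hew⟩
  omega

end Convergents

section Gaps

variable {c : ℤ → ℚ} {d : ℕ} {A B : ℚ[X]}

lemma IsConvergent.order_comp_X_pow_of_gapIn {p q : ℚ[X]} (h : IsConvergent c p q) (hd : 0 < d)
    (hc : IsLaurentSupport c) (hf : ¬ IsRationalFun c) {v : ℕ} (hgap : GapIn c q.natDegree v) :
    (∀ i < (d : ℤ) * v,
      remainderCoeff (substPowCoeff d c) (p.comp (X ^ d)) (q.comp (X ^ d)) i = 0) ∧
      remainderCoeff (substPowCoeff d c) (p.comp (X ^ d)) (q.comp (X ^ d)) (d * v) ≠ 0 := by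
  obtain ⟨hvan, hne⟩ := h.order_of_gapIn hc hf hgap
  refine ⟨fun i hi => ?_, ?_⟩
  · rw [remainderCoeff_comp_X_pow hd]
    exact substPowCoeff_eq_zero_of_lt hd hvan i hi
  · rwa [remainderCoeff_comp_X_pow hd, substPowCoeff_mul_left hd]

lemma MahlerEq.exists_isCoprime_remainderCoeff_eq_zero (hfeq : MahlerEq d A B c)
    (hA : A ≠ 0) (hc : IsLaurentSupport c) {p q : ℚ[X]} (hq : q ≠ 0) {e : ℤ}
    (h : ∀ i < e, remainderCoeff c p q i = 0) :
    ∃ g P Q : ℚ[X], g ≠ 0 ∧ Q ≠ 0 ∧ B * p = g * P ∧ A * q = g * Q ∧ IsCoprime P Q ∧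
      ∀ i < e - B.natDegree + g.natDegree, remainderCoeff (substPowCoeff d c) P Q i = 0 := by
  have hBA : ∀ i < e - B.natDegree, remainderCoeff (substPowCoeff d c) (B * p) (A * q) i = 0 :=
    fun i hi => by
      rw [remainderCoeff_of_mahlerEq hfeq]
      exact polyMulCoeff_eq_zero_of_lt h B hi
  obtain ⟨g, P, Q, hg, hBp, hAq, hPQ, hvan⟩ :=
    exists_coprime_of_remainderCoeff_eq_zero (hc.substPow d) (mul_ne_zero hA hq) hBA
  exact ⟨g, P, Q, hg, right_ne_zero_of_mul (hAq ▸ mul_ne_zero hA hq), hBp, hAq, hPQ, hvan⟩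

/-- `[u₀, v₀]` is the gap with `d u₀ ≤ deg Q < d v₀`, where `P/Q` is `B p/(A q)` in lowest
terms. -/
theorem GapIn.exists_gapPrec_of_lt (hd : 0 < d) (hA : A ≠ 0) (hc : IsLaurentSupport c)
    (hfeq : MahlerEq d A B c) (hf : ¬ IsRationalFun c) {u v : ℕ} (hgap : GapIn c u v)
    (huv : u + A.natDegree + B.natDegree < v) :
    ∃ u₀ v₀ : ℕ, GapIn c u₀ v₀ ∧ GapPrec c A B d u₀ u ∧
      (v : ℤ) - u - A.natDegree - B.natDegree ≤ d * ((v₀ : ℤ) - u₀) := by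
  obtain ⟨p, q, h, rfl⟩ := hgap.1
  obtain ⟨g, P, Q, hg, hQ, hBp, hAq, hPQ, hvan⟩ :=
    hfeq.exists_isCoprime_remainderCoeff_eq_zero hA hc h.2.1 (h.order_of_gapIn hc hf hgap).1
  have hdeg : A.natDegree + q.natDegree = g.natDegree + Q.natDegree := by
    rw [← natDegree_mul hA h.2.1, hAq, natDegree_mul hg hQ]
  obtain ⟨u₀, v₀, hgap₀, hu₀, hv₀⟩ := exists_gapIn_mul_le_lt hc hf hd Q.natDegree
  obtain ⟨p₀, q₀, h₀, rfl⟩ := hgap₀.1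
  zify at hu₀
  obtain ⟨hpq₀, hq₀⟩ := h₀.comp_X_pow hd
  obtain ⟨hvan₀, hne₀⟩ := h₀.order_comp_X_pow_of_gapIn hd hc hf hgap₀
  have hdeg₀ : ((q₀.comp (X ^ d)).natDegree : ℤ) < v - B.natDegree + g.natDegree := by
    rw [natDegree_comp, natDegree_X_pow, mul_comm]
    omega
  have hord : (v : ℤ) - B.natDegree + g.natDegree ≤ d * v₀ :=
    le_of_remainderCoeff_eq_zero hPQ hpq₀ hq₀ hvan hvan₀ hne₀ (by exact_mod_cast hv₀) hdeg₀
  obtain ⟨a, -, hQa, hPa⟩ := exists_eq_C_mul_of_remainderCoeff_eq_zero hpq₀ hPQ hq₀ hvan₀ hvan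
    (by exact_mod_cast hv₀) hdeg₀
  refine ⟨q₀.natDegree, v₀, hgap₀, ⟨p₀, q₀, p, q, 1, one_pos, h₀, rfl, h, rfl, ?_⟩, ?_⟩
  · simp only [Finset.prod_range_one, pow_zero, pow_one, comp_X]
    linear_combination q₀.comp (X ^ d) * hBp - p₀.comp (X ^ d) * hAq
      + g * q₀.comp (X ^ d) * hPa - g * p₀.comp (X ^ d) * hQa
  · rw [mul_sub]
    omega

end Gaps

theorem statement10_general
    (d : ℕ) (hd : 2 ≤ d)
    (A B : Polynomial ℚ) (hA : A ≠ 0)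
    (c : ℤ → ℚ) (hc : IsLaurentSupport c)
    (hfeq : MahlerEq d A B c)
    (hnotrat : ¬ IsRationalFun c)
    (u v : ℕ) (hprim : PrimitiveGap c A B d u v) :
    (v : ℝ) - (u : ℝ)
      ≤ (2 * (d : ℝ) - 1) * ((A.natDegree : ℝ) + (B.natDegree : ℝ)) / ((d : ℝ) - 1) := by
  by_contra! hlarge
  obtain ⟨⟨hgap, -⟩, hprimitive⟩ := hprim
  set r : ℝ := (A.natDegree : ℝ) + B.natDegree
  have hd1 : (0 : ℝ) < d - 1 := by
    have : (2 : ℝ) ≤ d := by exact_mod_cast hd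
    linarith
  have hbound : (2 * (d : ℝ) - 1) * r / (d - 1) = r + d * (r / (d - 1)) := by
    field_simp
    ring
  have hdr : 0 ≤ d * (r / (d - 1)) := by positivity
  have huv : u + A.natDegree + B.natDegree < v := by
    have : ((u + A.natDegree + B.natDegree : ℕ) : ℝ) < v := by push_cast; linarith
    exact_mod_cast this
  obtain ⟨u₀, v₀, hgap₀, hprec, hsize⟩ :=
    hgap.exists_gapPrec_of_lt (by omega) hA hc hfeq hnotrat huv
  refine hprimitive ⟨u₀, v₀, ⟨hgap₀, ?_⟩, hprec⟩
  have hsize' : (v : ℝ) - u - A.natDegree - B.natDegree ≤ d * ((v₀ : ℝ) - u₀) := by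
    exact_mod_cast hsize
  exact lt_of_mul_lt_mul_left (by linarith) (by positivity : (0 : ℝ) ≤ d)

/-- **Lemma 6.** The size of a primitive gap in `Φ(f)` does not exceed
`(2d - 1)(r_a + r_b)/(d - 1)`. -/
theorem statement10
    (d : ℕ) (hd : 2 ≤ d)
    (A B : Polynomial ℚ) (hA : A ≠ 0) (hB : B ≠ 0) (hAB : IsCoprime A B)
    (c : ℤ → ℚ) (hc : IsLaurentSupport c)
    (hfeq : MahlerEq d A B c)
    (hnotrat : ¬ IsRationalFun c)
    (u v : ℕ) (hprim : PrimitiveGap c A B d u v) :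
    (v : ℝ) - (u : ℝ)
      ≤ (2 * (d : ℝ) - 1) * ((A.natDegree : ℝ) + (B.natDegree : ℝ)) / ((d : ℝ) - 1) :=
  statement10_general d hd A B hA c hc hfeq hnotrat u v hprim
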